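/- arXiv:1907.02629 — 2 statements merged into one kernel-verified Lean document; each statement's English description precedes it below -/
import Mathlib

section
/- In the Bose representation, let Γ be a transversal plane of the regular 2-spread 𝕊 of PG(8,q), let g be a line of Γ, let π be an F_q-subplane of Γ, and let Π_g = ⟨g, g^q, g^{q^2}⟩ ∩ PG(8,q). Then: (1) in PG(8,q^3), for every point X ∈ Γ, the intersection of the π-scroll-plane ⦅X⦆_π with Π_g* is either empty, a T-point, a T-line, or a T-plane; and (2) in PG(8,q^6), for every point X ∈ Γ☆, the intersection ⦅X⦆_π ∩ Π_g☆ is either empty, a T-point, a T-line, or a T-plane. -/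
/-!
Common set-up: an explicit model of the Bruck-Bose representation of PG(2,q^3) in PG(6,q),
of the Bose representation of PG(2,q^3) in PG(8,q), and of their cubic and sextic
field extensions.

`Fq`, `F3`, `F6` are the fields of orders `q`, `q^3`, `q^6`.

* PG(2,q^3) is `Projectivization F3 (Fin 3 → F3)`, with line at infinity `z = 0`.
* The ambient 7-dimensional `Fq`-space of PG(6,q) is `V6 = (Fin 2 → F3) × Fq`.
  Its extensions to `F3` and `F6` are modelled blockwise using the Galois splitting
  `F3 ⊗ F3 ≅ F3 × F3 × F3`:  `V63 = (Fin 3 → Fin 2 → F3) × F3` and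
  `V66 = (Fin 3 → Fin 2 → F6) × F6`, with the Frobenius collineation acting by a cyclic
  shift of the blocks composed with coordinatewise q-th powers (`tauBB`).
* The hyperplane at infinity is `{v | v.2 = 0}`; the regular 2-spread consists of
  the planes `{(l•(x,y),0) | l ∈ F3}`, whose extensions meet the transversal lines:
  the transversal line `g^{q^e}` is the set of vectors `gBlockVec e a b`.
* Similarly PG(8,q) has ambient `Fq`-space `Fin 3 → F3` with extensions
  `Fin 3 → Fin 3 → K` (`K = F3, F6`), the Bose spread plane of a point `(x:y:z)` being
  `{l•(x,y,z)}`; the transversal plane `Γ^{q^e}` is the block `e` (`GammaPlane e`),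
  and a point `X̄ = (x:y:z)` of PG(2,q^3) corresponds to the point of `Γ` with vector
  `blockVec 0 ![x,y,z]`.
-/

noncomputable section
open scoped Classical

/-- The projective point `P` is represented, up to a nonzero scalar, by the vector `w`. -/
def pe {K V : Type*} [DivisionRing K] [AddCommGroup V] [Module K V]
    (P : Projectivization K V) (w : V) : Prop :=
  ∃ c : K, c ≠ 0 ∧ P.rep = c • w

/-- `v ↦ B ⬝ v^q`, the vector form of a collineation `X ↦ B X^q`. -/
def cpiVec (q : ℕ) {K : Type*} [Field K] (B : Matrix (Fin 3) (Fin 3) K)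
    (v : Fin 3 → K) : Fin 3 → K :=
  B.mulVec fun i => v i ^ q

/-- `v ↦ D ⬝ v^q` on a line (pairs of coordinates). -/
def cbVec (q : ℕ) {K : Type*} [Field K] (D : Matrix (Fin 2) (Fin 2) K)
    (v : Fin 2 → K) : Fin 2 → K :=
  D.mulVec fun i => v i ^ q

/-- The vector of the Bruck-Bose ambient extension placing the pair `(a,b)` in
Galois block `e` (a vector on the transversal line `g^{q^e}`). -/
def gBlockVec {K : Type*} [Zero K] (e : Fin 3) (a b : K) : (Fin 3 → Fin 2 → K) × K :=
  (fun e' => if e' = e then ![a, b] else 0, 0)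

/-- The Frobenius collineation `X ↦ X^q` on (extensions of) the Bruck-Bose ambient space. -/
def tauBB (q : ℕ) {K : Type*} [Field K] (w : (Fin 3 → Fin 2 → K) × K) :
    (Fin 3 → Fin 2 → K) × K :=
  (fun e k => w.1 (e - 1) k ^ q, w.2 ^ q)

/-- The vector of the Bose ambient extension placing `u` in Galois block `e`. -/
def blockVec {K : Type*} [Zero K] (e : Fin 3) (u : Fin 3 → K) : Fin 3 → Fin 3 → K :=
  fun e' => if e' = e then u else 0

/-- The Frobenius collineation `X ↦ X^q` on (extensions of) the Bose ambient space. -/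
def tauBose (q : ℕ) {K : Type*} [Field K] (w : Fin 3 → Fin 3 → K) : Fin 3 → Fin 3 → K :=
  fun e i => w (e - 1) i ^ q

/-- The transversal plane `Γ^{q^e}` of the Bose spread (as a set of vectors). -/
def GammaPlane {K : Type*} [Zero K] (e : Fin 3) : Set (Fin 3 → Fin 3 → K) :=
  {w | ∀ e', e' ≠ e → w e' = 0}

/-- The scroll plane `⟪X⟫_π = ⟨X, (X^{c_π^5})^q, (X^{c_π^4})^{q^2}⟩` of the point `X ∈ Γ`
(or `Γ^{extension}`) with `Γ`-coordinate vector `u`, where `c_π` is given by the matrix `B`. -/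
def scrollSub (q : ℕ) {K : Type*} [Field K] (B : Matrix (Fin 3) (Fin 3) K)
    (u : Fin 3 → K) : Submodule K (Fin 3 → Fin 3 → K) :=
  Submodule.span K
    {blockVec 0 u,
     blockVec 1 (fun i => ((cpiVec q B)^[5] u) i ^ q),
     blockVec 2 (fun i => ((cpiVec q B)^[4] u) i ^ q ^ 2)}

/-- The `b`-scroll plane `⟪X⟫_b = ⟨X, (X^{c_b^5})^q, (X^{c_b^4})^{q^2}⟩` of the point `X` of
the transversal line `g` (or its extension) with coordinate pair `(a,b)`, where `c_b` is
given by the matrix `D`. -/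
def bScrollSub (q : ℕ) {K : Type*} [Field K] (D : Matrix (Fin 2) (Fin 2) K)
    (a b : K) : Submodule K ((Fin 3 → Fin 2 → K) × K) :=
  Submodule.span K
    {gBlockVec 0 a b,
     gBlockVec 1 (((cbVec q D)^[5] ![a, b]) 0 ^ q) (((cbVec q D)^[5] ![a, b]) 1 ^ q),
     gBlockVec 2 (((cbVec q D)^[4] ![a, b]) 0 ^ q ^ 2) (((cbVec q D)^[4] ![a, b]) 1 ^ q ^ 2)}

/-- `S` is a single point lying on one of the transversal planes (a T-point). -/
def IsTPointSet {K : Type*} [Field K]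
    (S : Set (Projectivization K (Fin 3 → Fin 3 → K))) : Prop :=
  ∃ w : Fin 3 → Fin 3 → K, w ≠ 0 ∧ (∃ e, w ∈ GammaPlane e) ∧ S = {P | pe P w}

/-- `S` is the point set of a T-line: a line meeting two of the transversal planes. -/
def IsTLineSet {K : Type*} [Field K]
    (S : Set (Projectivization K (Fin 3 → Fin 3 → K))) : Prop :=
  ∃ (e e' : Fin 3) (u u' : Fin 3 → Fin 3 → K), e ≠ e' ∧ u ≠ 0 ∧ u' ≠ 0 ∧
    u ∈ GammaPlane e ∧ u' ∈ GammaPlane e' ∧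
    S = {P | ∃ s t : K, P.rep = s • u + t • u'}

/-- `S` is the point set of a T-plane: a plane meeting all three transversal planes. -/
def IsTPlaneSet {K : Type*} [Field K]
    (S : Set (Projectivization K (Fin 3 → Fin 3 → K))) : Prop :=
  ∃ u : Fin 3 → Fin 3 → Fin 3 → K, (∀ e, u e ∈ GammaPlane e) ∧ LinearIndependent K u ∧
    S = {P | P.rep ∈ Submodule.span K (Set.range u)}

/-- `S` is empty, a T-point, a T-line or a T-plane. -/
def TClass {K : Type*} [Field K]
    (S : Set (Projectivization K (Fin 3 → Fin 3 → K))) : Prop :=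
  S = ∅ ∨ IsTPointSet S ∨ IsTLineSet S ∨ IsTPlaneSet S

/-- `ζ` : the linear embedding of the (extended) Bruck-Bose ambient space into the
(extended) Bose ambient space, realising PG(6,q) as the 6-space `Σ_{6,q}` of PG(8,q). -/
def zetaBB {K : Type*} [Field K] (w : (Fin 3 → Fin 2 → K) × K) : Fin 3 → Fin 3 → K :=
  fun e => ![w.1 e 0, w.1 e 1, w.2]

section BruckBose

variable (Fq F3 F6 : Type) [Field Fq] [Field F3] [Field F6]
  [Fintype Fq] [Fintype F3] [Fintype F6]
  [Algebra Fq F3] [Algebra F3 F6] [Algebra Fq F6] [IsScalarTower Fq F3 F6]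

/-- The points of `PG(2,q^3)`. -/
abbrev Pt2 := Projectivization F3 (Fin 3 → F3)

/-- The points of the quadratic extension `PG(2,q^6)`. -/
abbrev Pt2e := Projectivization F6 (Fin 3 → F6)

/-- The line at infinity `ℓ∞` of `PG(2,q^3)`. -/
def linf : Set (Pt2 F3) := {P | P.rep 2 = 0}

/-- The extended line at infinity `ℓ∞⁺⁺` of `PG(2,q^6)`. -/
def linfe : Set (Pt2e F6) := {P | P.rep 2 = 0}

/-- Representing vectors of the image under `M` of the standard `F_q`-subplane. -/
def subplaneVecs (M : Matrix (Fin 3) (Fin 3) F3) : Set (Fin 3 → F3) :=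
  {u | ∃ a : Fin 3 → Fq, u = M.mulVec fun i => algebraMap Fq F3 (a i)}

/-- The `F_q`-subplane `π̄` of `PG(2,q^3)` determined by the invertible matrix `M`:
the image under `M` of the standard rational subplane.  (Every `F_q`-subplane arises
in this way.) -/
def subplaneOf (M : Matrix (Fin 3) (Fin 3) F3) : Set (Pt2 F3) :=
  {P | ∃ u ∈ subplaneVecs Fq F3 M, pe P u}

/-- Representing vectors of the image under `M` of the standard `F_q`-conic. -/
def conicVecs (M : Matrix (Fin 3) (Fin 3) F3) : Set (Fin 3 → F3) :=
  {u | (∃ θ : Fq, u = M.mulVec fun i => algebraMap Fq F3 (![1, θ, θ ^ 2] i)) ∨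
    u = M.mulVec ![0, 0, 1]}

/-- The `F_q`-conic `C̄` of `PG(2,q^3)` determined by the invertible matrix `M`: the image
under `M` of the standard conic of the standard rational subplane.  (Every `F_q`-conic of
an `F_q`-subplane arises this way.) -/
def conicOf (M : Matrix (Fin 3) (Fin 3) F3) : Set (Pt2 F3) :=
  {P | ∃ u ∈ conicVecs Fq F3 M, pe P u}

/-- Representing vectors of `C̄⁺`, the unique `F_{q^3}`-conic containing `C̄ = conicOf M`. -/
def conicPlusVecs (M : Matrix (Fin 3) (Fin 3) F3) : Set (Fin 3 → F3) :=
  {u | (∃ θ : F3, u = M.mulVec ![1, θ, θ ^ 2]) ∨ u = M.mulVec ![0, 0, 1]}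

/-- `C̄⁺`, the unique non-degenerate conic of `PG(2,q^3)` containing `C̄ = conicOf M`. -/
def conicPlusOf (M : Matrix (Fin 3) (Fin 3) F3) : Set (Pt2 F3) :=
  {P | ∃ u ∈ conicPlusVecs F3 M, pe P u}

/-- Representing vectors of `C̄⁺⁺`, the unique conic of `PG(2,q^6)` containing `C̄⁺`. -/
def conicPPVecs (M : Matrix (Fin 3) (Fin 3) F3) : Set (Fin 3 → F6) :=
  {u | (∃ θ : F6, u = (M.map (algebraMap F3 F6)).mulVec ![1, θ, θ ^ 2]) ∨
    u = (M.map (algebraMap F3 F6)).mulVec ![0, 0, 1]}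

/-- `C̄⁺⁺`, the unique conic of the quadratic extension `PG(2,q^6)` containing `C̄⁺`. -/
def conicPPOf (M : Matrix (Fin 3) (Fin 3) F3) : Set (Pt2e F6) :=
  {P | ∃ u ∈ conicPPVecs F3 F6 M, pe P u}

/-- The subplane determined by `M` is secant to `ℓ∞` (meets it in `q+1` points). -/
def SecantSubplane (M : Matrix (Fin 3) (Fin 3) F3) : Prop :=
  (subplaneOf Fq F3 M ∩ linf F3).ncard = Fintype.card Fq + 1

/-- The subplane determined by `M` is tangent to `ℓ∞` (meets it in exactly one point). -/
def TangentSubplane (M : Matrix (Fin 3) (Fin 3) F3) : Prop :=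
  (subplaneOf Fq F3 M ∩ linf F3).ncard = 1

/-- The subplane determined by `M` is exterior to `ℓ∞` (disjoint from it). -/
def ExteriorSubplane (M : Matrix (Fin 3) (Fin 3) F3) : Prop :=
  subplaneOf Fq F3 M ∩ linf F3 = ∅

/-- The collineation `X ↦ B X^q` is a generator of the unique order-3 collineation group of
`PG(2,q^3)` fixing the subplane `subplaneOf M` pointwise (i.e. it is `c̄_π` or `c̄_π²`). -/
def IsCpiGen (M B : Matrix (Fin 3) (Fin 3) F3) : Prop :=
  IsUnit B.det ∧
  (∀ P ∈ subplaneOf Fq F3 M, pe P (cpiVec (Fintype.card Fq) B P.rep)) ∧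
  (∀ P : Pt2 F3, pe P ((cpiVec (Fintype.card Fq) B)^[3] P.rep)) ∧
  (∃ P : Pt2 F3, ¬ pe P (cpiVec (Fintype.card Fq) B P.rep))

/-- The map `X ↦ D X^q` on `ℓ∞` (coordinatised by pairs) is a generator of the unique
order-3 collineation group of `ℓ∞` fixing the `F_q`-subline `b̄ = subplaneOf M ∩ ℓ∞`
pointwise. -/
def IsCbGen (M : Matrix (Fin 3) (Fin 3) F3) (D : Matrix (Fin 2) (Fin 2) F3) : Prop :=
  IsUnit D.det ∧
  (∀ P ∈ subplaneOf Fq F3 M ∩ linf F3,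
    ∃ c : F3, c ≠ 0 ∧
      cbVec (Fintype.card Fq) D ![P.rep 0, P.rep 1] = c • ![P.rep 0, P.rep 1]) ∧
  (∀ u : Fin 2 → F3, u ≠ 0 → ∃ c : F3, c ≠ 0 ∧ (cbVec (Fintype.card Fq) D)^[3] u = c • u) ∧
  (∃ u : Fin 2 → F3, u ≠ 0 ∧ ¬ ∃ c : F3, c ≠ 0 ∧ cbVec (Fintype.card Fq) D u = c • u)

/-- `P' = P^{c̄_π}` where `c̄_π : X ↦ B X^q`. -/
def cptRel (B : Matrix (Fin 3) (Fin 3) F3) (P P' : Pt2 F3) : Prop :=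
  pe P' (cpiVec (Fintype.card Fq) B P.rep)

/-- `E` is one of the two `(π̄,ℓ∞)`-carriers lying on `ℓ∞` (for `π̄` exterior to `ℓ∞`):
`E ∈ ℓ∞` and the image of `E` under `c̄_π` or `c̄_π²` again lies on `ℓ∞`. -/
def IsCarrierOnLinf (B : Matrix (Fin 3) (Fin 3) F3) (E : Pt2 F3) : Prop :=
  E ∈ linf F3 ∧ ∃ E1 : Pt2 F3, cptRel Fq F3 B E E1 ∧ E1 ∈ linf F3

/-! ### The Bruck-Bose ambient spaces -/

/-- The 7-dimensional `Fq`-vector space underlying `PG(6,q)`. -/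
abbrev V6 := (Fin 2 → F3) × Fq

/-- The points of `PG(6,q)`. -/
abbrev Pt6 := Projectivization Fq (V6 Fq F3)

/-- The cubic extension of `V6`, underlying `PG(6,q^3)`. -/
abbrev V63 := (Fin 3 → Fin 2 → F3) × F3

/-- The points of `PG(6,q^3)`. -/
abbrev Pt63 := Projectivization F3 (V63 F3)

/-- The sextic extension of `V6`, underlying `PG(6,q^6)`. -/
abbrev V66 := (Fin 3 → Fin 2 → F6) × F6

/-- The points of `PG(6,q^6)`. -/
abbrev Pt66 := Projectivization F6 (V66 F6)

/-- The hyperplane at infinity `Σ∞` of `PG(6,q)` (as a point set). -/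
def inf6 : Set (Pt6 Fq F3) := {P | P.rep.2 = 0}

/-- The extended hyperplane at infinity `Σ∞^*` in `PG(6,q^3)`. -/
def inf63 : Set (Pt63 F3) := {P | P.rep.2 = 0}

/-- The extended hyperplane at infinity `Σ∞^☆` in `PG(6,q^6)`. -/
def inf66 : Set (Pt66 F6) := {P | P.rep.2 = 0}

/-- The vectors of the spread plane corresponding to the point `(x : y : 0)` of `ℓ∞`. -/
def spreadVecs (x y : F3) : Set (V6 Fq F3) := {v | ∃ l : F3, v = (![l * x, l * y], 0)}

/-- The points of the plane `[P]` of the regular 2-spread `S` corresponding to the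
point `P̄ = (x : y : 0)` of `ℓ∞`. -/
def spreadPts (x y : F3) : Set (Pt6 Fq F3) := {P | P.rep ∈ spreadVecs Fq F3 x y}

/-- `s` is (the point set of) a plane of the regular 2-spread `S`. -/
def IsSpreadPlane (s : Set (Pt6 Fq F3)) : Prop :=
  ∃ x y : F3, ¬(x = 0 ∧ y = 0) ∧ s = spreadPts Fq F3 x y

/-- The embedding of `V6` into its cubic extension `V63`. -/
def iota6 (v : V6 Fq F3) : V63 F3 :=
  (fun e k => v.1 k ^ Fintype.card Fq ^ (e : ℕ), algebraMap Fq F3 v.2)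

/-- The embedding of `V6` into its sextic extension `V66`. -/
def iota66 (v : V6 Fq F3) : V66 F6 :=
  (fun e k => algebraMap F3 F6 (v.1 k ^ Fintype.card Fq ^ (e : ℕ)), algebraMap Fq F6 v.2)

/-- The embedding of `V63` into `V66`. -/
def kappa6 (w : V63 F3) : V66 F6 :=
  (fun e k => algebraMap F3 F6 (w.1 e k), algebraMap F3 F6 w.2)

/-- A representing vector of `P^{q^e}` where `P` is the point of the transversal line `g`
with coordinate pair `(a,b) ∈ F_{q^3}²`. -/
def gOrbitVec3 (a b : F3) (e : Fin 3) : V63 F3 :=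
  gBlockVec e (a ^ Fintype.card Fq ^ (e : ℕ)) (b ^ Fintype.card Fq ^ (e : ℕ))

/-- A representing vector of `P^{q^e}` where `P` is the point of the extended transversal
line `g^☆` with coordinate pair `(a,b) ∈ F_{q^6}²`. -/
def gOrbitVec6 (a b : F6) (e : ℕ) : V66 F6 :=
  gBlockVec (Fin.ofNat 3 e) (a ^ Fintype.card Fq ^ e) (b ^ Fintype.card Fq ^ e)

/-- The vectors of the extension to `PG(6,q^3)` of the spread plane of `(x : y : 0)`. -/
def extSpreadVecs3 (x y : F3) : Set (V63 F3) :=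
  {w | ∃ c : Fin 3 → F3, w = (fun e =>
    ![c e * x ^ Fintype.card Fq ^ (e : ℕ), c e * y ^ Fintype.card Fq ^ (e : ℕ)], 0)}

/-- The vectors of the extension to `PG(6,q^6)` of the spread plane of `(x : y : 0)`. -/
def extSpreadVecs6 (x y : F3) : Set (V66 F6) :=
  {w | ∃ c : Fin 3 → F6, w = (fun e =>
    ![c e * algebraMap F3 F6 (x ^ Fintype.card Fq ^ (e : ℕ)),
      c e * algebraMap F3 F6 (y ^ Fintype.card Fq ^ (e : ℕ))], 0)}

/-- The point set in `PG(6,q)` of the `k`-dimensional normal rational curve with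
parametrising vectors `v 0, …, v k`:  `{(1,θ,…,θ^k)} ∪ {(0,…,0,1)}` in the frame `v`. -/
def nrcPts6 {k : ℕ} (v : Fin (k + 1) → V6 Fq F3) : Set (Pt6 Fq F3) :=
  {P | (∃ θ : Fq, pe P (∑ i : Fin (k + 1), θ ^ (i : ℕ) • v i)) ∨ pe P (v (Fin.last k))}

/-- The point set in `PG(6,q^3)` of the extension of the normal rational curve `v`. -/
def nrcPts63 {k : ℕ} (v : Fin (k + 1) → V6 Fq F3) : Set (Pt63 F3) :=
  {P | (∃ θ : F3, pe P (∑ i : Fin (k + 1), θ ^ (i : ℕ) • iota6 Fq F3 (v i))) ∨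
    pe P (iota6 Fq F3 (v (Fin.last k)))}

/-- The point set in `PG(6,q^6)` of the extension of the normal rational curve `v`. -/
def nrcPts66 {k : ℕ} (v : Fin (k + 1) → V6 Fq F3) : Set (Pt66 F6) :=
  {P | (∃ θ : F6, pe P (∑ i : Fin (k + 1), θ ^ (i : ℕ) • iota66 Fq F3 F6 (v i))) ∨
    pe P (iota66 Fq F3 F6 (v (Fin.last k)))}

/-- `N` is a `k`-dimensional normal rational curve of `PG(6,q)`. -/
def IsNRC (k : ℕ) (N : Set (Pt6 Fq F3)) : Prop :=
  ∃ v : Fin (k + 1) → V6 Fq F3, LinearIndependent Fq v ∧ N = nrcPts6 Fq F3 v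

/-- The exact-at-infinity Bruck-Bose representation `[C]` of a point set `C` of
`PG(2,q^3)`: affine points go to affine points, and a point of `ℓ∞` goes to the whole
corresponding spread plane. -/
def bbExact (C : Set (Pt2 F3)) : Set (Pt6 Fq F3) :=
  {Q | ∃ P ∈ C, (∃ x y : F3, pe P ![x, y, 1] ∧ pe Q (![x, y], (1 : Fq))) ∨
    (∃ x y : F3, pe P ![x, y, 0] ∧ Q ∈ spreadPts Fq F3 x y)}

/-- `N` is the Bruck-Bose representation (usual convention: linear components at infinity
ignored) of the point set `C` of `PG(2,q^3)`: `N` is contained in the exact-at-infinity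
representation of `C` and contains all of its affine points. -/
def corrBB (C : Set (Pt2 F3)) (N : Set (Pt6 Fq F3)) : Prop :=
  N ⊆ bbExact Fq F3 C ∧ ∀ Q ∈ bbExact Fq F3 C, Q ∉ inf6 Fq F3 → Q ∈ N

/-! ### The Bose ambient spaces -/

/-- The points of `PG(8,q^3)`. -/
abbrev Pt93 := Projectivization F3 (Fin 3 → Fin 3 → F3)

/-- The points of `PG(8,q^6)`. -/
abbrev Pt96 := Projectivization F6 (Fin 3 → Fin 3 → F6)

/-- The vectors of `Π_g^* = ⟨g, g^q, g^{q^2}⟩` in `PG(8,q^3)`, where `g` is the line of the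
transversal plane `Γ` corresponding to the line `l` of `PG(2,q^3)`. -/
def PiG3 (l : Submodule F3 (Fin 3 → F3)) : Set (Fin 3 → Fin 3 → F3) :=
  {w | ∀ e : Fin 3, ∃ v ∈ l, w e = fun i => v i ^ Fintype.card Fq ^ (e : ℕ)}

/-- The vectors of `Π_g^☆` in `PG(8,q^6)`. -/
def PiG6 (l : Submodule F3 (Fin 3 → F3)) : Set (Fin 3 → Fin 3 → F6) :=
  {w | ∀ e : Fin 3, w e ∈ Submodule.span F6
    {u : Fin 3 → F6 | ∃ v ∈ l, u = fun i => algebraMap F3 F6 (v i) ^ Fintype.card Fq ^ (e : ℕ)}}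

/-- The extension to `PG(2,q^6)` of the line `l` of `PG(2,q^3)`. -/
def extLineF6 (l : Submodule F3 (Fin 3 → F3)) : Submodule F6 (Fin 3 → F6) :=
  Submodule.span F6 {u | ∃ v ∈ l, u = fun i => algebraMap F3 F6 (v i)}

/-- The vectors of the point set of `V(⟦C⟧)^*` in `PG(8,q^3)` for the `F_q`-conic of `M`:
the union of the `π`-scroll planes of the points of `C⁺` (with `c_π` given by `B`). -/
def boseVar3 (M B : Matrix (Fin 3) (Fin 3) F3) : Set (Fin 3 → Fin 3 → F3) :=
  {w | ∃ u ∈ conicPlusVecs F3 M, w ∈ scrollSub (Fintype.card Fq) B u}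

/-- The vectors of the point set of `V(⟦C⟧)^☆` in `PG(8,q^6)`: the union of the
`π`-scroll planes of the points of `C⁺⁺`. -/
def boseVar6 (M B : Matrix (Fin 3) (Fin 3) F3) : Set (Fin 3 → Fin 3 → F6) :=
  {w | ∃ u ∈ conicPPVecs F3 F6 M,
    w ∈ scrollSub (Fintype.card Fq) (B.map (algebraMap F3 F6)) u}

/-- The point set of the variety-extension `V([C])^*` in `PG(6,q^3)`:
`V(⟦C⟧)^* ∩ Σ_{6,q}^*`, transported to the Bruck-Bose model via `ζ`. -/
def bbVar3 (M B : Matrix (Fin 3) (Fin 3) F3) : Set (Pt63 F3) :=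
  {P | zetaBB P.rep ∈ boseVar3 Fq F3 M B}

/-- The point set of the variety-extension `V([C])^☆` in `PG(6,q^6)`. -/
def bbVar6 (M B : Matrix (Fin 3) (Fin 3) F3) : Set (Pt66 F6) :=
  {P | zetaBB P.rep ∈ boseVar6 Fq F3 F6 M B}

/-- `L` is a T-line of `Σ∞^*`: a line meeting two of the transversal lines `g,g^q,g^{q^2}`
of the regular 2-spread. -/
def IsTLineBB (L : Submodule F3 (V63 F3)) : Prop :=
  ∃ (e e' : Fin 3) (a b a' b' : F3), e ≠ e' ∧ ¬(a = 0 ∧ b = 0) ∧ ¬(a' = 0 ∧ b' = 0) ∧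
    L = Submodule.span F3 {gBlockVec e a b, gBlockVec e' a' b'}

/-- The T-line `h^{q^e}` where `h = E (E^{c_π})^{q^2}`, `E` (resp. `E^{c_π}`) being the point
of the transversal `g` with coordinate pair `(a,b)` (resp. `(a',b')`). -/
def hLine (a b a' b' : F3) (e : Fin 3) : Submodule F3 (V63 F3) :=
  Submodule.span F3
    {gBlockVec e (a ^ Fintype.card Fq ^ (e : ℕ)) (b ^ Fintype.card Fq ^ (e : ℕ)),
     gBlockVec (e + 2) (a' ^ Fintype.card Fq ^ ((e : ℕ) + 2))
       (b' ^ Fintype.card Fq ^ ((e : ℕ) + 2))}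

/-! ### 3-special normal rational curves -/

/-- The pair `(a,b) ∈ F_{q^6}²` is proportional to an `F_{q^3}`-rational pair, i.e. the
corresponding point of the extended transversal line `g^☆` lies on `g`. -/
def rationalPair (a b : F6) : Prop :=
  ∃ (a0 b0 : F3) (c : F6), c ≠ 0 ∧ a = c * algebraMap F3 F6 a0 ∧ b = c * algebraMap F3 F6 b0

/-- The weight `w(P)` of a point `P` of `PG(5,q^6)` (given by a representing vector `w`):
1 if `P` is on an extended transversal line of the spread, 2 if not but `P` is on a line
meeting two of the extended transversal lines, 3 otherwise. -/
def weightV (w : V66 F6) : ℕ :=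
  if ∃ (e : Fin 3) (a b : F6), w = gBlockVec e a b then 1
  else if ∃ (e e' : Fin 3) (a b a' b' s t : F6), e ≠ e' ∧
      w = s • gBlockVec e a b + t • gBlockVec e' a' b' then 2
  else 3

/-- The orbit size `o(P)` of the point with representing vector `w` under the Frobenius
collineation `X ↦ X^q`. -/
def orbitSizeV (w : V66 F6) : ℕ :=
  Set.ncard {Q : Pt66 F6 | ∃ n : ℕ, pe Q ((tauBB (Fintype.card Fq))^[n] w)}

/-- `s(P) = 1` if `P` lies in an extended plane of the spread `S`, else `s(P) = 2`. -/
def sValV (w : V66 F6) : ℕ :=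
  if ∃ x y : F3, ¬(x = 0 ∧ y = 0) ∧ w ∈ extSpreadVecs6 Fq F3 F6 x y then 1 else 2

/-- The point of `PG(5,q^6)` with representing vector `w` is `S`-happy:
`w(P) ⬝ o(P) = 3 s(P)`. -/
def HappyV (w : V66 F6) : Prop :=
  weightV F6 w * orbitSizeV Fq F6 w = 3 * sValV Fq F3 F6 w

/-- The polynomial whose homogeneous roots give the points at infinity of the normal
rational curve parametrised by `v` (the last coordinates of the frame). -/
def infPoly {k : ℕ} (v : Fin (k + 1) → V6 Fq F3) : Polynomial Fq :=
  ∑ i : Fin (k + 1), Polynomial.C (v i).2 * Polynomial.X ^ (i : ℕ)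

/-- The parametrised normal rational curve `v` is 3-special with respect to the regular
2-spread `S`: it is not contained in `Σ∞`, all its points at infinity (with multiplicity,
including the point at the infinite parameter value) are defined over `F_{q^6}` and are
`S`-happy, and their weights sum to 6. -/
def Is3SpecialData {k : ℕ} (v : Fin (k + 1) → V6 Fq F3) : Prop :=
  infPoly Fq F3 v ≠ 0 ∧
  ((infPoly Fq F3 v).map (algebraMap Fq F6)).roots.card =
    ((infPoly Fq F3 v).map (algebraMap Fq F6)).natDegree ∧
  (∀ θ ∈ ((infPoly Fq F3 v).map (algebraMap Fq F6)).roots,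
    HappyV Fq F3 F6 (∑ i : Fin (k + 1), θ ^ (i : ℕ) • iota66 Fq F3 F6 (v i))) ∧
  (((infPoly Fq F3 v).map (algebraMap Fq F6)).natDegree < k →
    HappyV Fq F3 F6 (iota66 Fq F3 F6 (v (Fin.last k)))) ∧
  (((infPoly Fq F3 v).map (algebraMap Fq F6)).roots.map fun θ =>
      weightV F6 (∑ i : Fin (k + 1), θ ^ (i : ℕ) • iota66 Fq F3 F6 (v i))).sum +
    (k - ((infPoly Fq F3 v).map (algebraMap Fq F6)).natDegree) *
      weightV F6 (iota66 Fq F3 F6 (v (Fin.last k))) = 6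

/-- `N` is a 3-special `k`-dimensional normal rational curve of `PG(6,q)` with respect to
the regular 2-spread `S`. -/
def Is3Special (k : ℕ) (N : Set (Pt6 Fq F3)) : Prop :=
  ∃ v : Fin (k + 1) → V6 Fq F3, LinearIndependent Fq v ∧ N = nrcPts6 Fq F3 v ∧
    Is3SpecialData Fq F3 F6 v

end BruckBose

/-! The scroll plane `⦅X⦆_π` is spanned by three points `b₀, b₁, b₂`, with `b_e` on the
transversal plane `Γ^{q^e}`, and membership in `Π_g^*` (or `Π_g^☆`) is tested block by block:
the `e`-th block must lie in a set closed under scalars (the conjugate `g^{q^e}`, or its span).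
Hence `∑ a_e b_e ∈ Π_g` iff `a_e = 0` for every `b_e ∉ Π_g`, so the intersection is the span
of those `b_e` lying in `Π_g`; zero, one, two or three of them give `∅`, a T-point, a T-line
or a T-plane. -/

theorem span_image_single_eq_pi {R V ι : Type*} [Semiring R] [AddCommMonoid V] [Module R V]
    [Fintype ι] [DecidableEq ι] (g : ι → V) (s : Finset ι) :
    Submodule.span R ((fun i => Pi.single i (g i)) '' s) =
      Submodule.pi Set.univ fun i => if i ∈ s then R ∙ g i else ⊥ := by
  apply le_antisymm
  · rw [Submodule.span_le]
    rintro _ ⟨j, hj, rfl⟩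
    rw [SetLike.mem_coe, Submodule.mem_pi]
    dsimp only
    intro i _
    by_cases hij : i = j
    · subst hij
      rw [Pi.single_eq_same, if_pos (Finset.mem_coe.1 hj)]
      exact Submodule.mem_span_singleton_self (g i)
    · simp [hij]
  · intro w hw
    rw [← Finset.univ_sum_single w]
    refine Submodule.sum_mem _ fun i _ => ?_
    have hwi := (Submodule.mem_pi.1 hw) i (Set.mem_univ i)
    split_ifs at hwi with hi
    · obtain ⟨a, ha⟩ := Submodule.mem_span_singleton.1 hwi
      rw [← ha, Pi.single_smul]
      exact Submodule.smul_mem _ a (Submodule.subset_span ⟨i, hi, rfl⟩)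
    · rw [(Submodule.mem_bot R).1 hwi, Pi.single_zero]
      exact Submodule.zero_mem _

theorem linearIndependent_pi_single_of_ne_zero {K V ι : Type*} [DivisionRing K]
    [AddCommGroup V] [Module K V] [Fintype ι] [DecidableEq ι] {g : ι → V} (hg : ∀ i, g i ≠ 0) :
    LinearIndependent K fun i => Pi.single i (g i) := by
  rw [Fintype.linearIndependent_iff]
  intro c hc i
  have hci : c i • g i = 0 := by
    simpa [Finset.sum_apply, Pi.single_apply] using congrFun hc i
  exact (smul_eq_zero.1 hci).resolve_right (hg i)

theorem mem_span_singleton_and_mem_cone_iff {K V : Type*} [DivisionRing K] [AddCommMonoid V]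
    [Module K V] {C : Set V} (hC0 : 0 ∈ C)
    (hC : ∀ (c : K) x, x ∈ C → c • x ∈ C) (g x : V) :
    x ∈ K ∙ g ∧ x ∈ C ↔ x ∈ (if g ∈ C then K ∙ g else ⊥ : Submodule K V) := by
  split_ifs with hg
  · exact ⟨And.left, fun hx => ⟨hx, by
      obtain ⟨a, rfl⟩ := Submodule.mem_span_singleton.1 hx
      exact hC a g hg⟩⟩
  · rw [Submodule.mem_bot K]
    constructor
    · rintro ⟨hx, hxC⟩
      obtain ⟨a, rfl⟩ := Submodule.mem_span_singleton.1 hx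
      by_contra ha
      exact hg (by simpa [inv_smul_smul₀ (left_ne_zero_of_smul ha)] using hC a⁻¹ _ hxC)
    · rintro rfl
      exact ⟨Submodule.zero_mem _, hC0⟩

theorem mem_span_range_single_and_mem_cones_iff {K V ι : Type*} [DivisionRing K]
    [AddCommMonoid V] [Module K V] [Fintype ι] [DecidableEq ι] (g : ι → V) {C : ι → Set V}
    (hC0 : ∀ i, 0 ∈ C i) (hC : ∀ i (c : K) x, x ∈ C i → c • x ∈ C i) (w : ι → V) :
    w ∈ Submodule.span K (Set.range fun i => Pi.single i (g i)) ∧ (∀ i, w i ∈ C i) ↔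
      w ∈ Submodule.span K
        ((fun i => Pi.single i (g i)) '' (Finset.univ.filter fun i => g i ∈ C i)) := by
  rw [← Set.image_univ, ← Finset.coe_univ, span_image_single_eq_pi, span_image_single_eq_pi]
  simp only [Submodule.mem_pi, Set.mem_univ, true_implies, Finset.mem_univ, if_true,
    Finset.mem_filter, true_and, ← forall_and]
  exact forall_congr' fun i => mem_span_singleton_and_mem_cone_iff (hC0 i) (hC i) (g i) (w i)

theorem pi_pow_ne_zero {ι M : Type*} [MonoidWithZero M] [NoZeroDivisors M] {v : ι → M}
    (hv : v ≠ 0) (N : ℕ) : (fun i => v i ^ N) ≠ 0 :=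
  fun h => hv (funext fun i => eq_zero_of_pow_eq_zero (congrFun h i))

theorem pow_pow_sub_pow_pow {F : Type*} [Field F] [Fintype F] {q n e : ℕ}
    (h : Fintype.card F = q ^ n) (he : e ≤ n) (c : F) : (c ^ q ^ (n - e)) ^ q ^ e = c := by
  rw [← pow_mul, ← pow_add, Nat.sub_add_cancel he, ← h, FiniteField.pow_card]

theorem smul_mem_frobenius_image {F ι : Type*} [Field F] [Fintype F] {q n e : ℕ}
    (h : Fintype.card F = q ^ n) (he : e ≤ n) (l : Submodule F (ι → F)) (c : F)
    {x : ι → F} (hx : ∃ v ∈ l, x = fun i => v i ^ q ^ e) :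
    ∃ v ∈ l, c • x = fun i => v i ^ q ^ e := by
  obtain ⟨v, hv, rfl⟩ := hx
  refine ⟨c ^ q ^ (n - e) • v, l.smul_mem _ hv, funext fun i => ?_⟩
  simp [mul_pow, pow_pow_sub_pow_pow h he]

section TransversalBlocks

variable {K : Type*} [Field K]

theorem blockVec_eq_single (e : Fin 3) (u : Fin 3 → K) : blockVec e u = Pi.single e u := by
  funext e'
  simp [blockVec, Pi.single_apply]

theorem tClass_span_image_single {g : Fin 3 → Fin 3 → K} (hg : ∀ e, g e ≠ 0)
    (s : Finset (Fin 3)) :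
    TClass {P : Projectivization K (Fin 3 → Fin 3 → K) |
      P.rep ∈ Submodule.span K ((fun e => Pi.single e (g e)) '' s)} := by
  have hΓ : ∀ e, Pi.single e (g e) ∈ GammaPlane e := fun e _ he => Pi.single_eq_of_ne he _
  have h0 : ∀ e, (Pi.single e (g e) : Fin 3 → Fin 3 → K) ≠ 0 :=
    fun e => Pi.single_eq_zero_iff.not.2 (hg e)
  have hcard : s.card ≤ 3 := s.card_le_univ.trans_eq (Fintype.card_fin 3)
  interval_cases hs : s.card
  · left
    obtain rfl := Finset.card_eq_zero.1 hs
    ext P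
    simpa using P.rep_nonzero
  · right; left
    obtain ⟨e, rfl⟩ := Finset.card_eq_one.1 hs
    refine ⟨_, h0 e, ⟨e, hΓ e⟩, ?_⟩
    ext P
    simp only [Finset.coe_singleton, Set.image_singleton, Set.mem_ofPred_eq,
      Submodule.mem_span_singleton, pe]
    refine ⟨fun ⟨c, hc⟩ => ⟨c, ?_, hc.symm⟩, fun ⟨c, _, hc⟩ => ⟨c, hc.symm⟩⟩
    rintro rfl
    exact P.rep_nonzero (by rw [← hc, zero_smul])
  · right; right; left
    obtain ⟨e, e', he, rfl⟩ := Finset.card_eq_two.1 hs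
    refine ⟨e, e', _, _, he, h0 e, h0 e', hΓ e, hΓ e', ?_⟩
    ext P
    simp only [Finset.coe_insert, Finset.coe_singleton, Set.image_pair, Set.mem_ofPred_eq,
      Submodule.mem_span_pair, eq_comm]
  · right; right; right
    obtain rfl := Finset.eq_univ_of_card s (hs.trans (Fintype.card_fin 3).symm)
    exact ⟨_, hΓ, linearIndependent_pi_single_of_ne_zero hg, by simp [Set.image_univ]⟩

theorem tClass_span_blockVec_inter_cones {g : Fin 3 → Fin 3 → K} (hg : ∀ e, g e ≠ 0)
    {C : Fin 3 → Set (Fin 3 → K)} (hC0 : ∀ e, 0 ∈ C e)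
    (hC : ∀ e (c : K) x, x ∈ C e → c • x ∈ C e) :
    TClass {P : Projectivization K (Fin 3 → Fin 3 → K) |
      P.rep ∈ Submodule.span K {blockVec 0 (g 0), blockVec 1 (g 1), blockVec 2 (g 2)} ∧
        ∀ e, P.rep e ∈ C e} := by
  have hrange : ({blockVec 0 (g 0), blockVec 1 (g 1), blockVec 2 (g 2)} : Set _) =
      Set.range fun e => Pi.single e (g e) := by
    ext
    simp [blockVec_eq_single, Fin.exists_fin_succ, eq_comm]
  simp_rw [hrange, mem_span_range_single_and_mem_cones_iff g hC0 hC]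
  exact tClass_span_image_single hg _

theorem cpiVec_iterate_ne_zero (q : ℕ) {B : Matrix (Fin 3) (Fin 3) K} (hB : IsUnit B.det)
    {u : Fin 3 → K} (hu : u ≠ 0) (n : ℕ) : (cpiVec q B)^[n] u ≠ 0 := by
  induction n with
  | zero => exact hu
  | succ n ih =>
    rw [Function.iterate_succ_apply']
    exact ((Matrix.mulVec_injective_of_isUnit ((Matrix.isUnit_iff_isUnit_det B).2 hB)).ne_iff'
      (Matrix.mulVec_zero B)).2 (pi_pow_ne_zero ih q)

theorem tClass_scrollSub_inter_cones (q : ℕ) {B : Matrix (Fin 3) (Fin 3) K}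
    (hB : IsUnit B.det) {u : Fin 3 → K} (hu : u ≠ 0) {C : Fin 3 → Set (Fin 3 → K)}
    (hC0 : ∀ e, 0 ∈ C e) (hC : ∀ e (c : K) x, x ∈ C e → c • x ∈ C e) :
    TClass {P : Projectivization K (Fin 3 → Fin 3 → K) |
      P.rep ∈ scrollSub q B u ∧ ∀ e, P.rep e ∈ C e} := by
  refine tClass_span_blockVec_inter_cones
    (g := ![u, fun i => ((cpiVec q B)^[5] u) i ^ q, fun i => ((cpiVec q B)^[4] u) i ^ q ^ 2])
    (fun e => ?_) hC0 hC
  fin_cases e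
  · exact hu
  · exact pi_pow_ne_zero (cpiVec_iterate_ne_zero q hB hu 5) q
  · exact pi_pow_ne_zero (cpiVec_iterate_ne_zero q hB hu 4) (q ^ 2)

end TransversalBlocks

theorem scroll_plane_meets_PiG_general (Fq F3 F6 : Type) [Field Fq] [Field F3] [Field F6]
    [Fintype Fq] [Fintype F3]
    [Algebra Fq F3] [Algebra F3 F6]
    (h3 : Fintype.card F3 = Fintype.card Fq ^ 3)
    (M B : Matrix (Fin 3) (Fin 3) F3) (hB : IsCpiGen Fq F3 M B)
    (l : Submodule F3 (Fin 3 → F3)) :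
    (∀ u : Fin 3 → F3, u ≠ 0 →
      TClass {P : Pt93 F3 | P.rep ∈ scrollSub (Fintype.card Fq) B u ∧
        P.rep ∈ PiG3 Fq F3 l}) ∧
    (∀ u : Fin 3 → F6, u ≠ 0 →
      TClass {P : Pt96 F6 |
        P.rep ∈ scrollSub (Fintype.card Fq) (B.map (algebraMap F3 F6)) u ∧
        P.rep ∈ PiG6 Fq F3 F6 l}) := by
  have hq : Fintype.card Fq ≠ 0 := Fintype.card_ne_zero
  have hB6 : IsUnit (B.map (algebraMap F3 F6)).det := by
    simpa [RingHom.map_det] using hB.1.map (algebraMap F3 F6)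
  refine ⟨fun u hu => ?_, fun u hu => ?_⟩
  · exact tClass_scrollSub_inter_cones _ hB.1 hu
      (C := fun e => {x | ∃ v ∈ l, x = fun i => v i ^ Fintype.card Fq ^ (e : ℕ)})
      (fun e => ⟨0, l.zero_mem, funext fun i => by simp [zero_pow (pow_ne_zero _ hq)]⟩)
      (fun e c x hx => smul_mem_frobenius_image h3 e.is_lt.le l c hx)
  · exact tClass_scrollSub_inter_cones _ hB6 hu (fun e => Submodule.zero_mem _)
      (fun e c x hx => Submodule.smul_mem _ c hx)

/-- Lemma 3.3: for a line `g` of the transversal plane `Γ` (given by a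
line `l` of PG(2,q³)) and an `F_q`-subplane `π` of `Γ` (given by `M`, with `c_π` given
by `B`), every `π`-scroll plane meets `Π_g^*` (resp. `Π_g^☆`) in ∅, a T-point, a T-line
or a T-plane. -/
theorem scroll_plane_meets_PiG (Fq F3 F6 : Type) [Field Fq] [Field F3] [Field F6]
    [Fintype Fq] [Fintype F3] [Fintype F6]
    [Algebra Fq F3] [Algebra F3 F6] [Algebra Fq F6] [IsScalarTower Fq F3 F6]
    (h3 : Fintype.card F3 = Fintype.card Fq ^ 3)
    (h6 : Fintype.card F6 = Fintype.card Fq ^ 6)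
    (M B : Matrix (Fin 3) (Fin 3) F3) (hM : IsUnit M.det) (hB : IsCpiGen Fq F3 M B)
    (l : Submodule F3 (Fin 3 → F3)) (hl : Module.finrank F3 l = 2) :
    (∀ u : Fin 3 → F3, u ≠ 0 →
      TClass {P : Pt93 F3 | P.rep ∈ scrollSub (Fintype.card Fq) B u ∧
        P.rep ∈ PiG3 Fq F3 l}) ∧
    (∀ u : Fin 3 → F6, u ≠ 0 →
      TClass {P : Pt96 F6 |
        P.rep ∈ scrollSub (Fintype.card Fq) (B.map (algebraMap F3 F6)) u ∧
        P.rep ∈ PiG6 Fq F3 F6 l}) :=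
  scroll_plane_meets_PiG_general Fq F3 F6 h3 M B hB l
end
end

section
/- Let C̄ be an F_q-conic in an F_q-subplane π̄ of PG(2,q^3) that is secant to ℓ∞. Then in the exact-at-infinity Bruck–Bose representation in PG(6,q), the variety V([C]) decomposes into a non-degenerate conic N_2, which lies in a plane of PG(6,q)∖Σ∞ meeting q+1 of the spread planes, together with two planes in Σ∞ (possibly repeated, and possibly lying in the extension Σ∞☆∖Σ∞). -/
/-!
Common set-up: an explicit model of the Bruck-Bose representation of PG(2,q^3) in PG(6,q),
of the Bose representation of PG(2,q^3) in PG(8,q), and of their cubic and sextic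
field extensions.

`Fq`, `F3`, `F6` are the fields of orders `q`, `q^3`, `q^6`.

* PG(2,q^3) is `Projectivization F3 (Fin 3 → F3)`, with line at infinity `z = 0`.
* The ambient 7-dimensional `Fq`-space of PG(6,q) is `V6 = (Fin 2 → F3) × Fq`.
  Its extensions to `F3` and `F6` are modelled blockwise using the Galois splitting
  `F3 ⊗ F3 ≅ F3 × F3 × F3`:  `V63 = (Fin 3 → Fin 2 → F3) × F3` and
  `V66 = (Fin 3 → Fin 2 → F6) × F6`, with the Frobenius collineation acting by a cyclic
  shift of the blocks composed with coordinatewise q-th powers (`tauBB`).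
* The hyperplane at infinity is `{v | v.2 = 0}`; the regular 2-spread consists of
  the planes `{(l•(x,y),0) | l ∈ F3}`, whose extensions meet the transversal lines:
  the transversal line `g^{q^e}` is the set of vectors `gBlockVec e a b`.
* Similarly PG(8,q) has ambient `Fq`-space `Fin 3 → F3` with extensions
  `Fin 3 → Fin 3 → K` (`K = F3, F6`), the Bose spread plane of a point `(x:y:z)` being
  `{l•(x,y,z)}`; the transversal plane `Γ^{q^e}` is the block `e` (`GammaPlane e`),
  and a point `X̄ = (x:y:z)` of PG(2,q^3) corresponds to the point of `Γ` with vector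
  `blockVec 0 ![x,y,z]`.
-/

noncomputable section
open scoped Classical

/-!
After rescaling `M`, the line at infinity has a rational equation `r` in the coordinates of
`π̄`: the `q + 1 ≥ 2` points of `π̄ ∩ ℓ∞` are rational, and the line through two rational points
is rational (cross product).  The point `M (1, θ, θ²)` of `C̄` is then affine exactly when
`r ⬝ (1, θ, θ²) ≠ 0`, and its Bruck–Bose image is the point `Σ θⁱ vᵢ` for the `F_q`-frame
`vᵢ = (M₀ᵢ, M₁ᵢ; rᵢ)` of `PG(6,q)`.  Hence `[C]` is the conic `N₂` with frame `v` together with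
the spread planes of the at most two points of `C̄` on `ℓ∞`.  The plane `⟨v⟩` meets `Σ∞` in the
image of the subline `π̄ ∩ ℓ∞`, so it meets `q + 1` spread planes.  Finally, every spread plane is
the set of rational points of its extension in `Σ∞☆`, and a missing point at infinity is
replaced by a plane of `Σ∞☆` without rational points.
-/

open Matrix

section Pe

variable {K V : Type*} [Field K] [AddCommGroup V] [Module K V]

theorem pe_ne_zero {P : Projectivization K V} {w : V} (h : pe P w) : w ≠ 0 := by
  rintro rfl
  obtain ⟨c, -, hc⟩ := h
  exact P.rep_nonzero (by rw [hc, smul_zero])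

theorem pe_mk {w : V} (hw : w ≠ 0) : pe (Projectivization.mk K w hw) w := by
  obtain ⟨a, ha⟩ := Projectivization.exists_smul_eq_mk_rep K w hw
  exact ⟨a, a.ne_zero, ha.symm⟩

theorem pe_smul_iff {P : Projectivization K V} {w : V} {c : K} (hc : c ≠ 0) :
    pe P (c • w) ↔ pe P w := by
  constructor
  · rintro ⟨d, hd, h⟩
    exact ⟨d * c, mul_ne_zero hd hc, by rw [h, smul_smul]⟩
  · rintro ⟨d, hd, h⟩
    exact ⟨d * c⁻¹, mul_ne_zero hd (inv_ne_zero hc),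
      by rw [h, smul_smul, inv_mul_cancel_right₀ hc]⟩

theorem pe.exists_eq_smul {P : Projectivization K V} {w w' : V} (h : pe P w) (h' : pe P w') :
    ∃ c : K, c ≠ 0 ∧ w' = c • w := by
  obtain ⟨c, hc, hr⟩ := h
  obtain ⟨d, hd, hr'⟩ := h'
  refine ⟨d⁻¹ * c, mul_ne_zero (inv_ne_zero hd) hc, ?_⟩
  rw [← smul_smul, ← hr, hr', smul_smul, inv_mul_cancel₀ hd, one_smul]

theorem pe.eq {P P' : Projectivization K V} {w : V} (h : pe P w) (h' : pe P' w) : P = P' := by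
  obtain ⟨c, hc, hr⟩ := h
  obtain ⟨d, hd, hr'⟩ := h'
  rw [← P.mk_rep, ← P'.mk_rep, Projectivization.mk_eq_mk_iff']
  exact ⟨c * d⁻¹, by rw [hr', hr, smul_smul, inv_mul_cancel_right₀ hd]⟩

end Pe

section RationalLine

variable {K L : Type*} [Field K] [Field L] [Algebra K L]

theorem algebraMap_crossProduct (a a' : Fin 3 → K) :
    (fun i => algebraMap K L ((a ⨯₃ a') i)) =
      (fun i => algebraMap K L (a i)) ⨯₃ fun i => algebraMap K L (a' i) := by
  ext i
  fin_cases i <;> simp [cross_apply]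

/-- A line of `PG(2, L)` through two distinct `K`-rational points is `K`-rational: its
coordinate vector is a multiple of the cross product of the two points. -/
theorem exists_smul_eq_algebraMap_crossProduct {w : Fin 3 → L} (hw : w ≠ 0)
    {a a' : Fin 3 → K} (hind : a ⨯₃ a' ≠ 0)
    (ha : w ⬝ᵥ (fun i => algebraMap K L (a i)) = 0)
    (ha' : w ⬝ᵥ (fun i => algebraMap K L (a' i)) = 0) :
    ∃ t : L, t ≠ 0 ∧ t • w = fun i => algebraMap K L ((a ⨯₃ a') i) := by
  have hcross : (fun i => algebraMap K L ((a ⨯₃ a') i)) ≠ 0 := fun h =>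
    hind (funext fun i => (algebraMap K L).injective (by simpa using congrFun h i))
  have hperp : w ⨯₃ (fun i => algebraMap K L ((a ⨯₃ a') i)) = 0 := by
    rw [algebraMap_crossProduct, cross_cross_eq_smul_sub_smul', ha', dotProduct_comm, ha,
      zero_smul, zero_smul, sub_zero]
  obtain ⟨t, ht⟩ := (Projectivization.mk_eq_mk_iff' L _ _ hcross hw).mp
    ((Projectivization.mk_eq_mk_iff_crossProduct_eq_zero hw hcross).mpr hperp).symm
  exact ⟨t, by rintro rfl; exact hcross (by rw [← ht, zero_smul]), ht⟩

end RationalLine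

/-- Representatives of the points of the conic `Y² = XZ` of `PG(2, K)`. -/
def stdConicVecs (K : Type) [Field K] : Set (Fin 3 → K) :=
  {a | (∃ θ : K, a = ![1, θ, θ ^ 2]) ∨ a = ![0, 0, 1]}

section Scaling

variable {Fq F3 : Type} [Field Fq] [Field F3] [Algebra Fq F3]

theorem mem_subplaneOf_iff {M : Matrix (Fin 3) (Fin 3) F3} {P : Pt2 F3} :
    P ∈ subplaneOf Fq F3 M ↔ ∃ a : Fin 3 → Fq, pe P (M *ᵥ fun i => algebraMap Fq F3 (a i)) := by
  simp only [subplaneOf, subplaneVecs, Set.mem_ofPred_eq]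
  constructor
  · rintro ⟨u, ⟨a, rfl⟩, h⟩
    exact ⟨a, h⟩
  · rintro ⟨a, h⟩
    exact ⟨_, ⟨a, rfl⟩, h⟩

theorem mem_conicOf_iff {M : Matrix (Fin 3) (Fin 3) F3} {P : Pt2 F3} :
    P ∈ conicOf Fq F3 M ↔
      ∃ a ∈ stdConicVecs Fq, pe P (M *ᵥ fun i => algebraMap Fq F3 (a i)) := by
  have h001 : (fun i => algebraMap Fq F3 (![0, 0, 1] i)) = ![0, 0, 1] := by
    ext i
    fin_cases i <;> simp
  simp only [conicOf, conicVecs, stdConicVecs, Set.mem_ofPred_eq]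
  constructor
  · rintro ⟨u, ⟨θ, rfl⟩ | rfl, h⟩
    · exact ⟨_, Or.inl ⟨θ, rfl⟩, h⟩
    · exact ⟨_, Or.inr rfl, by rwa [h001]⟩
  · rintro ⟨a, ⟨θ, rfl⟩ | rfl, h⟩
    · exact ⟨_, Or.inl ⟨θ, rfl⟩, h⟩
    · exact ⟨_, Or.inr rfl, by rwa [← h001]⟩

theorem subplaneOf_smul {c : F3} (hc : c ≠ 0) (M : Matrix (Fin 3) (Fin 3) F3) :
    subplaneOf Fq F3 (c • M) = subplaneOf Fq F3 M := by
  ext P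
  simp only [mem_subplaneOf_iff, smul_mulVec, pe_smul_iff hc]

theorem conicOf_smul {c : F3} (hc : c ≠ 0) (M : Matrix (Fin 3) (Fin 3) F3) :
    conicOf Fq F3 (c • M) = conicOf Fq F3 M := by
  ext P
  simp only [mem_conicOf_iff, smul_mulVec, pe_smul_iff hc]

end Scaling

section Secant

variable {Fq F3 : Type} [Field Fq] [Field F3] [Algebra Fq F3]

theorem mulVec_algebraMap_smul (M : Matrix (Fin 3) (Fin 3) F3) (t : Fq) (a : Fin 3 → Fq) :
    (M *ᵥ fun i => algebraMap Fq F3 ((t • a) i)) =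
      algebraMap Fq F3 t • M *ᵥ fun i => algebraMap Fq F3 (a i) := by
  rw [← mulVec_smul]
  congr 1
  ext i
  simp

theorem mem_linf_iff_of_pe {P : Pt2 F3} {u : Fin 3 → F3} (h : pe P u) :
    P ∈ linf F3 ↔ u 2 = 0 := by
  obtain ⟨c, hc, hP⟩ := h
  change P.rep 2 = 0 ↔ _
  rw [hP, Pi.smul_apply, smul_eq_mul, mul_eq_zero, or_iff_right hc]

theorem exists_of_mem_subplaneOf_inter_linf {M : Matrix (Fin 3) (Fin 3) F3} {P : Pt2 F3}
    (hP : P ∈ subplaneOf Fq F3 M ∩ linf F3) :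
    ∃ a : Fin 3 → Fq, a ≠ 0 ∧ pe P (M *ᵥ fun i => algebraMap Fq F3 (a i)) ∧
      M 2 ⬝ᵥ (fun i => algebraMap Fq F3 (a i)) = 0 := by
  obtain ⟨a, hPa⟩ := mem_subplaneOf_iff.mp hP.1
  refine ⟨a, ?_, hPa, (mem_linf_iff_of_pe hPa).mp hP.2⟩
  rintro rfl
  exact pe_ne_zero hPa (by simp [← Pi.zero_def])

/-- Two distinct points of the `F_q`-subline `π̄ ∩ ℓ∞` force the equation of `ℓ∞` in the
coordinates of `π̄` (the last row of `M`) to be rational up to a scalar. -/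
theorem SecantSubplane.exists_smul_row_two_eq_algebraMap [Fintype Fq]
    {M : Matrix (Fin 3) (Fin 3) F3} (hM : IsUnit M.det) (hsec : SecantSubplane Fq F3 M) :
    ∃ c : F3, c ≠ 0 ∧ ∃ r : Fin 3 → Fq, ∀ i, c * M 2 i = algebraMap Fq F3 (r i) := by
  have hcard : 1 < (subplaneOf Fq F3 M ∩ linf F3).ncard := by
    have := Fintype.card_pos (α := Fq)
    rw [hsec]
    omega
  obtain ⟨P, P', hP, hP', hne⟩ :=
    (Set.one_lt_ncard_iff (Set.finite_of_ncard_pos (by omega))).mp hcard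
  obtain ⟨a, ha0, hPa, ha⟩ := exists_of_mem_subplaneOf_inter_linf hP
  obtain ⟨a', ha0', hPa', ha'⟩ := exists_of_mem_subplaneOf_inter_linf hP'
  have hrow : M 2 ≠ 0 := fun h =>
    hM.ne_zero (det_eq_zero_of_row_eq_zero 2 fun j => congrFun h j)
  have hind : a ⨯₃ a' ≠ 0 := by
    intro h
    obtain ⟨t, rfl⟩ := (Projectivization.mk_eq_mk_iff' Fq a a' ha0 ha0').mp
      ((Projectivization.mk_eq_mk_iff_crossProduct_eq_zero ha0 ha0').mpr h)
    have ht : algebraMap Fq F3 t ≠ 0 :=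
      (map_ne_zero _).mpr fun h0 => ha0 (by rw [h0, zero_smul])
    rw [mulVec_algebraMap_smul, pe_smul_iff ht] at hPa
    exact hne (hPa.eq hPa')
  obtain ⟨t, ht, h⟩ := exists_smul_eq_algebraMap_crossProduct hrow hind ha ha'
  exact ⟨t, ht, a ⨯₃ a', fun i => congrFun h i⟩

end Secant

section Spread

variable {Fq F3 : Type} [Field Fq] [Field F3] [Algebra Fq F3]

theorem spreadPts_mul {c : F3} (hc : c ≠ 0) (x y : F3) :
    spreadPts Fq F3 (c * x) (c * y) = spreadPts Fq F3 x y := by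
  ext Q
  constructor
  · rintro ⟨l, hl⟩
    exact ⟨l * c, by rw [hl, mul_assoc, mul_assoc]⟩
  · rintro ⟨l, hl⟩
    exact ⟨l * c⁻¹, by rw [hl, mul_assoc, mul_assoc, inv_mul_cancel_left₀ hc,
      inv_mul_cancel_left₀ hc]⟩

theorem mem_spreadPts_of_pe {Q : Pt6 Fq F3} {x y : F3} (h : pe Q ((![x, y], 0) : V6 Fq F3)) :
    Q ∈ spreadPts Fq F3 x y := by
  obtain ⟨c, -, hc⟩ := h
  refine ⟨algebraMap Fq F3 c, ?_⟩
  rw [hc]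
  ext k
  · fin_cases k <;> simp [Algebra.smul_def]
  · simp

theorem spreadPts_rep_eq {P : Pt2 F3} {u : Fin 3 → F3} (hP : pe P u) :
    spreadPts Fq F3 (P.rep 0) (P.rep 1) = spreadPts Fq F3 (u 0) (u 1) := by
  obtain ⟨c, hc, h⟩ := hP
  simp only [h, Pi.smul_apply, smul_eq_mul, spreadPts_mul hc]

theorem spreadPts_injOn_linf :
    Set.InjOn (fun P : Pt2 F3 => spreadPts Fq F3 (P.rep 0) (P.rep 1)) (linf F3) := by
  intro P hP P' hP' h
  have hxy : ((![P.rep 0, P.rep 1], 0) : V6 Fq F3) ≠ 0 := by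
    intro h0
    apply P.rep_nonzero
    ext i
    fin_cases i
    · simpa using congrFun (congrArg Prod.fst h0) 0
    · simpa using congrFun (congrArg Prod.fst h0) 1
    · exact hP
  have hmem := mem_spreadPts_of_pe (pe_mk (K := Fq) hxy)
  simp only at h
  rw [h] at hmem
  obtain ⟨l, hl⟩ := hmem
  obtain ⟨c, hc0, hc⟩ := pe_mk (K := Fq) hxy
  rw [hc] at hl
  have h0 : algebraMap Fq F3 c * P.rep 0 = l * P'.rep 0 := by
    simpa [Algebra.smul_def] using congrFun (congrArg Prod.fst hl) 0
  have h1 : algebraMap Fq F3 c * P.rep 1 = l * P'.rep 1 := by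
    simpa [Algebra.smul_def] using congrFun (congrArg Prod.fst hl) 1
  replace hc0 : algebraMap Fq F3 c ≠ 0 := (map_ne_zero _).mpr hc0
  rw [← P.mk_rep, ← P'.mk_rep, Projectivization.mk_eq_mk_iff']
  refine ⟨(algebraMap Fq F3 c)⁻¹ * l, ?_⟩
  ext i
  fin_cases i
  · simp [mul_assoc, ← h0, hc0]
  · simp [mul_assoc, ← h1, hc0]
  · simp [show P.rep 2 = 0 from hP, show P'.rep 2 = 0 from hP']

end Spread

section ExactRepresentation

variable {Fq F3 : Type} [Field Fq] [Field F3] [Algebra Fq F3]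

theorem bbExact_rel_iff_of_pe {P : Pt2 F3} {u : Fin 3 → F3} (hP : pe P u) (Q : Pt6 Fq F3) :
    ((∃ x y : F3, pe P ![x, y, 1] ∧ pe Q ((![x, y], 1) : V6 Fq F3)) ∨
      (∃ x y : F3, pe P ![x, y, 0] ∧ Q ∈ spreadPts Fq F3 x y)) ↔
    (u 2 ≠ 0 ∧ pe Q ((![u 0 / u 2, u 1 / u 2], 1) : V6 Fq F3)) ∨
      (u 2 = 0 ∧ Q ∈ spreadPts Fq F3 (u 0) (u 1)) := by
  have coords : ∀ {x y z : F3}, pe P ![x, y, z] →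
      ∃ c, c ≠ 0 ∧ x = c * u 0 ∧ y = c * u 1 ∧ z = c * u 2 := by
    intro x y z h
    obtain ⟨c, hc, h⟩ := hP.exists_eq_smul h
    exact ⟨c, hc, by simpa using congrFun h 0, by simpa using congrFun h 1,
      by simpa using congrFun h 2⟩
  constructor
  · rintro (⟨x, y, hPxy, hQ⟩ | ⟨x, y, hPxy, hQ⟩)
    · obtain ⟨c, -, rfl, rfl, h2⟩ := coords hPxy
      have hu2 : u 2 ≠ 0 := right_ne_zero_of_mul (h2 ▸ one_ne_zero)
      refine Or.inl ⟨hu2, ?_⟩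
      rwa [div_eq_inv_mul, div_eq_inv_mul, ← eq_inv_of_mul_eq_one_left h2.symm]
    · obtain ⟨c, hc, rfl, rfl, h2⟩ := coords hPxy
      refine Or.inr ⟨(mul_eq_zero.mp h2.symm).resolve_left hc, ?_⟩
      rwa [spreadPts_mul hc] at hQ
  · rintro (⟨hu2, hQ⟩ | ⟨hu2, hQ⟩)
    · refine Or.inl ⟨u 0 / u 2, u 1 / u 2, ?_, hQ⟩
      have h : ![u 0 / u 2, u 1 / u 2, 1] = (u 2)⁻¹ • u := by
        ext i
        fin_cases i <;> simp [div_eq_inv_mul, hu2]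
      rwa [h, pe_smul_iff (inv_ne_zero hu2)]
    · refine Or.inr ⟨u 0, u 1, ?_, hQ⟩
      have h : ![u 0, u 1, 0] = u := by
        ext i
        fin_cases i <;> simp [hu2]
      rwa [h]

end ExactRepresentation

section ConicFrame

variable {Fq F3 : Type} [Field Fq] [Field F3] [Algebra Fq F3]

/-- The frame of the plane of `PG(6,q)` containing the conic `N₂` of `[C]`, when the last row
of `M` is the rational vector `r`. -/
def conicFrame (M : Matrix (Fin 3) (Fin 3) F3) (r : Fin 3 → Fq) : Fin 3 → V6 Fq F3 :=
  fun i => (![M 0 i, M 1 i], r i)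

variable {M : Matrix (Fin 3) (Fin 3) F3} {r : Fin 3 → Fq}

theorem sum_smul_conicFrame (a : Fin 3 → Fq) :
    ∑ i, a i • conicFrame M r i =
      ((![(M *ᵥ fun i => algebraMap Fq F3 (a i)) 0, (M *ᵥ fun i => algebraMap Fq F3 (a i)) 1],
        r ⬝ᵥ a) : V6 Fq F3) := by
  ext k
  · fin_cases k <;>
      simp [conicFrame, Fin.sum_univ_three, mulVec, dotProduct, Algebra.smul_def, mul_comm]
  · simp [conicFrame, Fin.sum_univ_three, dotProduct, mul_comm]

theorem mulVec_two_of_row_two_eq (hrow : ∀ i, M 2 i = algebraMap Fq F3 (r i)) (a : Fin 3 → Fq) :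
    (M *ᵥ fun i => algebraMap Fq F3 (a i)) 2 = algebraMap Fq F3 (r ⬝ᵥ a) := by
  simp [mulVec, dotProduct, hrow]

theorem ne_zero_of_row_two_eq (hM : IsUnit M.det) (hrow : ∀ i, M 2 i = algebraMap Fq F3 (r i)) :
    r ≠ 0 := by
  rintro rfl
  exact hM.ne_zero (det_eq_zero_of_row_eq_zero 2 fun j => by simp [hrow])

theorem mulVec_ne_zero (hM : IsUnit M.det) {a : Fin 3 → Fq} (ha : a ≠ 0) :
    (M *ᵥ fun i => algebraMap Fq F3 (a i)) ≠ 0 := fun h =>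
  ha <| funext fun i => (FaithfulSMul.algebraMap_eq_zero_iff Fq F3).mp <|
    congrFun (eq_zero_of_mulVec_eq_zero hM.ne_zero h) i

theorem linearIndependent_conicFrame (hM : IsUnit M.det)
    (hrow : ∀ i, M 2 i = algebraMap Fq F3 (r i)) :
    LinearIndependent Fq (conicFrame M r) := by
  rw [Fintype.linearIndependent_iff]
  intro a ha
  by_contra! hne
  apply mulVec_ne_zero hM (Function.ne_iff.mpr hne)
  rw [sum_smul_conicFrame] at ha
  ext k
  fin_cases k
  · simpa using congrFun (congrArg Prod.fst ha) 0
  · simpa using congrFun (congrArg Prod.fst ha) 1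
  · simpa [mulVec_two_of_row_two_eq hrow] using congrArg Prod.snd ha

end ConicFrame

section Decomposition

variable {Fq F3 : Type} [Field Fq] [Field F3] [Algebra Fq F3]

theorem nrcPts6_eq_setOf_stdConicVecs (v : Fin (2 + 1) → V6 Fq F3) :
    nrcPts6 Fq F3 v = {Q | ∃ a ∈ stdConicVecs Fq, pe Q (∑ i, a i • v i)} := by
  ext Q
  simp only [nrcPts6, stdConicVecs, Set.mem_ofPred_eq]
  constructor
  · rintro (⟨θ, h⟩ | h)
    · exact ⟨_, Or.inl ⟨θ, rfl⟩, by simpa [Fin.sum_univ_three] using h⟩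
    · exact ⟨_, Or.inr rfl, by simpa [Fin.sum_univ_three] using h⟩
  · rintro ⟨a, ⟨θ, rfl⟩ | rfl, h⟩
    · exact Or.inl ⟨θ, by simpa [Fin.sum_univ_three] using h⟩
    · exact Or.inr (by simpa [Fin.sum_univ_three] using h)

variable {M : Matrix (Fin 3) (Fin 3) F3} {r : Fin 3 → Fq}

theorem mulVec_ne_zero_of_mem_stdConicVecs (hM : IsUnit M.det) {a : Fin 3 → Fq}
    (ha : a ∈ stdConicVecs Fq) : (M *ᵥ fun i => algebraMap Fq F3 (a i)) ≠ 0 := by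
  refine mulVec_ne_zero hM fun h => ?_
  rcases ha with ⟨θ, rfl⟩ | rfl
  · simpa using congrFun h 0
  · simpa using congrFun h 2

theorem pe_affine_iff {Q : Pt6 Fq F3} {x y : F3} {s : Fq} (hs0 : s ≠ 0) :
    pe Q ((![x / algebraMap Fq F3 s, y / algebraMap Fq F3 s], 1) : V6 Fq F3) ↔
      pe Q ((![x, y], s) : V6 Fq F3) := by
  have hs' : algebraMap Fq F3 s ≠ 0 := (map_ne_zero _).mpr hs0
  have h : ((![x, y], s) : V6 Fq F3) =
      s • (![x / algebraMap Fq F3 s, y / algebraMap Fq F3 s], 1) := by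
    ext k
    · fin_cases k <;> simp [Algebra.smul_def, mul_div_cancel₀ _ hs']
    · simp
  rw [h, pe_smul_iff hs0]

theorem mem_bbExact_conicOf_iff (hM : IsUnit M.det)
    (hrow : ∀ i, M 2 i = algebraMap Fq F3 (r i)) (Q : Pt6 Fq F3) :
    Q ∈ bbExact Fq F3 (conicOf Fq F3 M) ↔ ∃ a ∈ stdConicVecs Fq,
      (r ⬝ᵥ a ≠ 0 ∧ pe Q (∑ i, a i • conicFrame M r i)) ∨
      (r ⬝ᵥ a = 0 ∧ Q ∈ spreadPts Fq F3 ((M *ᵥ fun i => algebraMap Fq F3 (a i)) 0)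
        ((M *ᵥ fun i => algebraMap Fq F3 (a i)) 1)) := by
  have rel : ∀ a {P : Pt2 F3}, pe P (M *ᵥ fun i => algebraMap Fq F3 (a i)) →
      (((∃ x y : F3, pe P ![x, y, 1] ∧ pe Q ((![x, y], 1) : V6 Fq F3)) ∨
        (∃ x y : F3, pe P ![x, y, 0] ∧ Q ∈ spreadPts Fq F3 x y)) ↔
      (r ⬝ᵥ a ≠ 0 ∧ pe Q (∑ i, a i • conicFrame M r i)) ∨
      (r ⬝ᵥ a = 0 ∧ Q ∈ spreadPts Fq F3 ((M *ᵥ fun i => algebraMap Fq F3 (a i)) 0)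
        ((M *ᵥ fun i => algebraMap Fq F3 (a i)) 1))) := by
    intro a P hPa
    rw [bbExact_rel_iff_of_pe hPa, mulVec_two_of_row_two_eq hrow, map_ne_zero, map_eq_zero,
      sum_smul_conicFrame]
    exact or_congr (and_congr_right fun ha => pe_affine_iff ha) Iff.rfl
  constructor
  · rintro ⟨P, hP, hPQ⟩
    obtain ⟨a, ha, hPa⟩ := mem_conicOf_iff.mp hP
    exact ⟨a, ha, (rel a hPa).mp hPQ⟩
  · rintro ⟨a, ha, h⟩
    have hP := pe_mk (K := F3) (mulVec_ne_zero_of_mem_stdConicVecs hM ha)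
    exact ⟨_, mem_conicOf_iff.mpr ⟨a, ha, hP⟩, (rel a hP).mpr h⟩

theorem bbExact_conicOf_eq (hM : IsUnit M.det) (hrow : ∀ i, M 2 i = algebraMap Fq F3 (r i)) :
    bbExact Fq F3 (conicOf Fq F3 M) = nrcPts6 Fq F3 (conicFrame M r) ∪
      ⋃ a ∈ {a ∈ stdConicVecs Fq | r ⬝ᵥ a = 0},
        spreadPts Fq F3 ((M *ᵥ fun i => algebraMap Fq F3 (a i)) 0)
          ((M *ᵥ fun i => algebraMap Fq F3 (a i)) 1) := by
  ext Q
  simp only [mem_bbExact_conicOf_iff hM hrow, nrcPts6_eq_setOf_stdConicVecs, Set.mem_union,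
    Set.mem_iUnion₂, Set.mem_ofPred_eq, exists_prop]
  constructor
  · rintro ⟨a, ha, ⟨-, h⟩ | ⟨h0, h⟩⟩
    · exact Or.inl ⟨a, ha, h⟩
    · exact Or.inr ⟨a, ⟨ha, h0⟩, h⟩
  · rintro (⟨a, ha, h⟩ | ⟨a, ⟨ha, h0⟩, h⟩)
    · by_cases h0 : r ⬝ᵥ a = 0
      · rw [sum_smul_conicFrame, h0] at h
        exact ⟨a, ha, Or.inr ⟨h0, mem_spreadPts_of_pe h⟩⟩
      · exact ⟨a, ha, Or.inl ⟨h0, h⟩⟩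
    · exact ⟨a, ha, Or.inr ⟨h0, h⟩⟩

end Decomposition

section Count

variable {Fq F3 : Type} [Field Fq] [Field F3] [Algebra Fq F3]

omit [Algebra Fq F3] in
theorem pair_ne_zero_iff {x y : F3} :
    ((![x, y], 0) : V6 Fq F3) ≠ 0 ↔ ¬(x = 0 ∧ y = 0) := by
  simp [Prod.ext_iff, funext_iff, Fin.forall_fin_two]

theorem not_both_zero_of_ne_zero {u : Fin 3 → F3} (hu : u ≠ 0) (h2 : u 2 = 0) :
    ¬(u 0 = 0 ∧ u 1 = 0) := fun ⟨h0, h1⟩ =>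
  hu (funext fun i => by fin_cases i <;> assumption)

variable {M : Matrix (Fin 3) (Fin 3) F3} {r : Fin 3 → Fq}

theorem spreadPlanes_meeting_span_conicFrame (hrow : ∀ i, M 2 i = algebraMap Fq F3 (r i)) :
    {s : Set (Pt6 Fq F3) | IsSpreadPlane Fq F3 s ∧
      ∃ Q ∈ s, Q.rep ∈ Submodule.span Fq (Set.range (conicFrame M r))} =
    (fun P : Pt2 F3 => spreadPts Fq F3 (P.rep 0) (P.rep 1)) '' (subplaneOf Fq F3 M ∩ linf F3) := by
  ext s
  constructor
  · rintro ⟨⟨x, y, hxy, rfl⟩, Q, ⟨l, hl⟩, hspan⟩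
    obtain ⟨a, ha⟩ := (Submodule.mem_span_range_iff_exists_fun Fq).mp hspan
    rw [sum_smul_conicFrame, hl] at ha
    have h0 : (M *ᵥ fun i => algebraMap Fq F3 (a i)) 0 = l * x := by
      simpa using congrFun (congrArg Prod.fst ha) 0
    have h1 : (M *ᵥ fun i => algebraMap Fq F3 (a i)) 1 = l * y := by
      simpa using congrFun (congrArg Prod.fst ha) 1
    have h2 : (M *ᵥ fun i => algebraMap Fq F3 (a i)) 2 = 0 := by
      rw [mulVec_two_of_row_two_eq hrow, show r ⬝ᵥ a = 0 from congrArg Prod.snd ha, map_zero]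
    have hl0 : l ≠ 0 := by
      rintro rfl
      exact Q.rep_nonzero (by rw [hl]; simp)
    have hu : (M *ᵥ fun i => algebraMap Fq F3 (a i)) ≠ 0 := fun hu =>
      hxy ⟨(mul_eq_zero.mp (h0.symm.trans (congrFun hu 0))).resolve_left hl0,
        (mul_eq_zero.mp (h1.symm.trans (congrFun hu 1))).resolve_left hl0⟩
    refine ⟨_, ⟨mem_subplaneOf_iff.mpr ⟨a, pe_mk hu⟩, (mem_linf_iff_of_pe (pe_mk hu)).mpr h2⟩, ?_⟩
    simp only [spreadPts_rep_eq (pe_mk hu), h0, h1, spreadPts_mul hl0]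
  · rintro ⟨P, ⟨hPs, hPl⟩, rfl⟩
    obtain ⟨a, hPa⟩ := mem_subplaneOf_iff.mp hPs
    have h2 := (mem_linf_iff_of_pe hPa).mp hPl
    have hra : r ⬝ᵥ a = 0 := by
      rwa [mulVec_two_of_row_two_eq hrow, map_eq_zero] at h2
    have hw := (pair_ne_zero_iff (Fq := Fq)).mpr (not_both_zero_of_ne_zero (pe_ne_zero hPa) h2)
    simp only [spreadPts_rep_eq hPa]
    refine ⟨⟨_, _, pair_ne_zero_iff.mp hw, rfl⟩, _, mem_spreadPts_of_pe (pe_mk hw), ?_⟩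
    obtain ⟨c, -, hc⟩ := pe_mk (K := Fq) hw
    rw [hc, ← hra, ← sum_smul_conicFrame]
    exact Submodule.smul_mem _ _ ((Submodule.mem_span_range_iff_exists_fun Fq).mpr ⟨a, rfl⟩)

theorem ncard_spreadPlanes_meeting_span_conicFrame
    (hrow : ∀ i, M 2 i = algebraMap Fq F3 (r i)) :
    {s : Set (Pt6 Fq F3) | IsSpreadPlane Fq F3 s ∧
      ∃ Q ∈ s, Q.rep ∈ Submodule.span Fq (Set.range (conicFrame M r))}.ncard =
    (subplaneOf Fq F3 M ∩ linf F3).ncard := by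
  rw [spreadPlanes_meeting_span_conicFrame hrow,
    (spreadPts_injOn_linf.mono Set.inter_subset_right).ncard_image]

end Count

section PlanesAtInfinity

/-- The plane of `Σ∞☆` consisting of the vectors `(c₀ z₀, c₁ z₁, c₂ z₂; 0)`, one point on each
extended transversal line. -/
def blockPlane {F6 : Type} [Field F6] (z : Fin 3 → Fin 2 → F6) : (Fin 3 → F6) →ₗ[F6] V66 F6 :=
  (LinearMap.pi fun e => LinearMap.pi fun k => z e k • LinearMap.proj e).prod 0

theorem blockPlane_apply {F6 : Type} [Field F6] (z : Fin 3 → Fin 2 → F6) (c : Fin 3 → F6) :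
    blockPlane z c = (fun e k => z e k * c e, 0) := rfl

theorem blockPlane_injective {F6 : Type} [Field F6] {z : Fin 3 → Fin 2 → F6}
    (hz : ∀ e, z e ≠ 0) : Function.Injective (blockPlane z) := by
  rw [← LinearMap.ker_eq_bot, LinearMap.ker_eq_bot']
  intro c hc
  ext e
  obtain ⟨k, hk⟩ := Function.ne_iff.mp (hz e)
  have h := congrFun (congrFun (congrArg Prod.fst hc) e) k
  exact (mul_eq_zero.mp h).resolve_left hk

variable (Fq F3 F6 : Type) [Field Fq] [Field F3] [Field F6] [Fintype Fq] [Algebra Fq F3]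
  [Algebra F3 F6] [Algebra Fq F6]

/-- `S` is the set of points of `PG(6,q)` lying on some plane of `Σ∞☆`. -/
def IsRationalTraceAtInfinity (S : Set (Pt6 Fq F3)) : Prop :=
  ∃ W : Submodule F6 (V66 F6), Module.finrank F6 W = 3 ∧ (∀ w ∈ W, (w : V66 F6).2 = 0) ∧
    {Q | iota66 Fq F3 F6 Q.rep ∈ W} = S

variable {Fq F3 F6}

theorem isRationalTraceAtInfinity_of_blockPlane {z : Fin 3 → Fin 2 → F6} (hz : ∀ e, z e ≠ 0)
    {S : Set (Pt6 Fq F3)} (hS : ∀ Q, (∃ c, blockPlane z c = iota66 Fq F3 F6 Q.rep) ↔ Q ∈ S) :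
    IsRationalTraceAtInfinity Fq F3 F6 S := by
  refine ⟨LinearMap.range (blockPlane z), ?_, ?_, Set.ext hS⟩
  · rw [LinearMap.finrank_range_of_inj (blockPlane_injective hz), Module.finrank_fin_fun]
  · rintro w ⟨c, rfl⟩
    rfl

/-- The plane of `Σ∞☆` is the extension of the spread plane, meeting the extended transversal
lines in conjugate points. -/
theorem isRationalTraceAtInfinity_spreadPts {x y : F3} (hxy : ¬(x = 0 ∧ y = 0)) :
    IsRationalTraceAtInfinity Fq F3 F6 (spreadPts Fq F3 x y) := by
  obtain ⟨k₀, hk₀⟩ : ∃ k, ![x, y] k ≠ 0 := by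
    by_contra! h
    exact hxy ⟨h 0, h 1⟩
  refine isRationalTraceAtInfinity_of_blockPlane
    (z := fun e k => algebraMap F3 F6 (![x, y] k ^ Fintype.card Fq ^ (e : ℕ)))
    (fun e h => hk₀ ?_) fun Q => ⟨?_, ?_⟩
  · simpa using congrFun h k₀
  · rintro ⟨c, hc⟩
    have h0 : ∀ k, algebraMap F3 F6 (![x, y] k) * c 0 = algebraMap F3 F6 (Q.rep.1 k) := by
      intro k
      simpa [blockPlane_apply, iota66] using congrFun (congrFun (congrArg Prod.fst hc) 0) k
    have h2 : Q.rep.2 = 0 := by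
      simpa [blockPlane_apply, iota66] using (congrArg Prod.snd hc).symm
    have hc0 : c 0 = algebraMap F3 F6 (Q.rep.1 k₀ / ![x, y] k₀) := by
      rw [map_div₀, ← h0, mul_div_cancel_left₀ _ ((map_ne_zero _).mpr hk₀)]
    have hk : ∀ k, Q.rep.1 k = Q.rep.1 k₀ / ![x, y] k₀ * ![x, y] k := fun k =>
      (algebraMap F3 F6).injective (by rw [← h0, hc0, map_mul, mul_comm])
    refine ⟨Q.rep.1 k₀ / ![x, y] k₀, Prod.ext (funext fun k => ?_) h2⟩
    fin_cases k <;> simp [hk 0, hk 1]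
  · rintro ⟨l, hl⟩
    refine ⟨fun e => algebraMap F3 F6 (l ^ Fintype.card Fq ^ (e : ℕ)), ?_⟩
    ext e k
    · fin_cases k <;> simp [blockPlane_apply, iota66, hl, mul_pow, mul_comm]
    · simp [blockPlane_apply, iota66, hl]

theorem isRationalTraceAtInfinity_empty : IsRationalTraceAtInfinity Fq F3 F6 ∅ := by
  refine isRationalTraceAtInfinity_of_blockPlane
    (z := fun e => if e = 0 then ![1, 0] else ![0, 1])
    (fun e h => by split_ifs at h; exacts [one_ne_zero (congrFun h 0), one_ne_zero (congrFun h 1)])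
    fun Q => ⟨fun ⟨c, hc⟩ => Q.rep_nonzero ?_, fun h => h.elim⟩
  have h1 := congrFun (congrFun (congrArg Prod.fst hc) 0) 1
  have h0 := congrFun (congrFun (congrArg Prod.fst hc) 1) 0
  have h2 := congrArg Prod.snd hc
  simp [blockPlane_apply, iota66] at h0 h1 h2
  ext k
  · fin_cases k
    · exact (map_eq_zero _).mp (eq_zero_of_pow_eq_zero h0.symm)
    · simpa using h1.symm
  · exact (map_eq_zero _).mp h2.symm

end PlanesAtInfinity

section Zeros

variable {K : Type} [Field K]

theorem quadratic_roots_subset_pair {a b c : K} (ha : a ≠ 0) :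
    ∃ θ₁ θ₂ : K, ∀ θ, c + b * θ + a * θ ^ 2 = 0 → θ = θ₁ ∨ θ = θ₂ := by
  by_cases h : ∃ θ₁, c + b * θ₁ + a * θ₁ ^ 2 = 0
  · obtain ⟨θ₁, hθ₁⟩ := h
    refine ⟨θ₁, -b / a - θ₁, fun θ hθ => ?_⟩
    -- Vieta: the two roots sum to `-b / a`.
    have hfac : (θ - θ₁) * (a * θ + b + a * θ₁) = 0 := by linear_combination hθ - hθ₁
    refine (mul_eq_zero.mp hfac).imp sub_eq_zero.mp fun h => ?_
    field_simp
    linear_combination h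
  · exact ⟨0, 0, fun θ hθ => absurd ⟨θ, hθ⟩ h⟩

theorem line_inter_stdConicVecs_subset_pair {r : Fin 3 → K} (hr : r ≠ 0) :
    ∃ a₁ a₂ : Fin 3 → K, {a ∈ stdConicVecs K | r ⬝ᵥ a = 0} ⊆ {a₁, a₂} := by
  simp only [Set.subset_def, stdConicVecs, Set.mem_ofPred_eq, Set.mem_insert_iff,
    Set.mem_singleton_iff]
  by_cases h2 : r 2 = 0
  · by_cases h1 : r 1 = 0
    · have h0 : r 0 ≠ 0 := fun h0 => hr (funext fun i => by fin_cases i <;> assumption)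
      refine ⟨![0, 0, 1], ![0, 0, 1], ?_⟩
      rintro a ⟨⟨θ, rfl⟩ | rfl, hra⟩
      · exact absurd (by simpa [dotProduct, Fin.sum_univ_three, h1, h2] using hra) h0
      · exact Or.inl rfl
    · refine ⟨![1, -r 0 / r 1, (-r 0 / r 1) ^ 2], ![0, 0, 1], ?_⟩
      rintro a ⟨⟨θ, rfl⟩ | rfl, hra⟩
      · have hlin : r 0 + r 1 * θ = 0 := by
          simpa [dotProduct, Fin.sum_univ_three, h2] using hra
        have hθ : θ = -r 0 / r 1 := by
          field_simp
          linear_combination hlin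
        exact Or.inl (by rw [hθ])
      · exact Or.inr rfl
  · obtain ⟨θ₁, θ₂, hθ⟩ := quadratic_roots_subset_pair (a := r 2) (b := r 1) (c := r 0) h2
    refine ⟨![1, θ₁, θ₁ ^ 2], ![1, θ₂, θ₂ ^ 2], ?_⟩
    rintro a ⟨⟨θ, rfl⟩ | rfl, hra⟩
    · rcases hθ θ (by simpa [dotProduct, Fin.sum_univ_three] using hra) with rfl | rfl
      · exact Or.inl rfl
      · exact Or.inr rfl
    · exact absurd (by simpa [dotProduct, Fin.sum_univ_three] using hra) h2

end Zeros

theorem exists_biUnion_eq_union_of_subset_pair {α β : Type*} {Z : Set α} {a₁ a₂ : α}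
    (hZ : Z ⊆ {a₁, a₂}) {f : α → Set β} {p : Set β → Prop} (h₀ : p ∅)
    (hf : ∀ a ∈ Z, p (f a)) : ∃ S₁ S₂, p S₁ ∧ p S₂ ∧ ⋃ a ∈ Z, f a = S₁ ∪ S₂ := by
  refine ⟨if a₁ ∈ Z then f a₁ else ∅, if a₂ ∈ Z then f a₂ else ∅, ?_, ?_, ?_⟩
  · split_ifs with h
    exacts [hf a₁ h, h₀]
  · split_ifs with h
    exacts [hf a₂ h, h₀]
  · ext x
    simp only [Set.mem_iUnion₂, Set.mem_union, exists_prop]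
    constructor
    · rintro ⟨a, ha, hx⟩
      rcases hZ ha with rfl | rfl
      · exact Or.inl (by rwa [if_pos ha])
      · exact Or.inr (by rwa [if_pos ha])
    · rintro (hx | hx) <;> split_ifs at hx with ha
      exacts [⟨_, ha, hx⟩, hx.elim, ⟨_, ha, hx⟩, hx.elim]

theorem fqConic_secant_decomposition_general (Fq F3 F6 : Type) [Field Fq] [Field F3] [Field F6]
    [Fintype Fq]
    [Algebra Fq F3] [Algebra F3 F6] [Algebra Fq F6]
    (M : Matrix (Fin 3) (Fin 3) F3) (hM : IsUnit M.det)
    (hsec : SecantSubplane Fq F3 M) :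
    ∃ v : Fin (2 + 1) → V6 Fq F3, LinearIndependent Fq v ∧
      (¬ ∀ i, (v i).2 = 0) ∧
      {s : Set (Pt6 Fq F3) | IsSpreadPlane Fq F3 s ∧
        ∃ Q ∈ s, Q.rep ∈ Submodule.span Fq (Set.range v)}.ncard = Fintype.card Fq + 1 ∧
      ∃ W1 W2 : Submodule F6 (V66 F6),
        Module.finrank F6 W1 = 3 ∧ Module.finrank F6 W2 = 3 ∧
        (∀ w ∈ W1, (w : V66 F6).2 = 0) ∧ (∀ w ∈ W2, (w : V66 F6).2 = 0) ∧
        bbExact Fq F3 (conicOf Fq F3 M) =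
          nrcPts6 Fq F3 v ∪ {Q | iota66 Fq F3 F6 Q.rep ∈ W1} ∪
            {Q | iota66 Fq F3 F6 Q.rep ∈ W2} := by
  obtain ⟨c, hc, r, hrow⟩ := hsec.exists_smul_row_two_eq_algebraMap hM
  have hN : IsUnit (c • M).det := by
    rw [det_smul, isUnit_iff_ne_zero]
    exact mul_ne_zero (pow_ne_zero _ hc) hM.ne_zero
  rw [SecantSubplane, ← subplaneOf_smul hc] at hsec
  rw [← conicOf_smul hc]
  obtain ⟨a₁, a₂, hZ⟩ := line_inter_stdConicVecs_subset_pair (ne_zero_of_row_two_eq hN hrow)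
  obtain ⟨_, _, ⟨W₁, hW₁, hW₁inf, rfl⟩, ⟨W₂, hW₂, hW₂inf, rfl⟩, hunion⟩ :=
    exists_biUnion_eq_union_of_subset_pair (p := IsRationalTraceAtInfinity Fq F3 F6) hZ
      isRationalTraceAtInfinity_empty
      fun a ⟨ha, hra⟩ => isRationalTraceAtInfinity_spreadPts <|
        not_both_zero_of_ne_zero (mulVec_ne_zero_of_mem_stdConicVecs hN ha)
          (by rw [mulVec_two_of_row_two_eq hrow, hra, map_zero])
  refine ⟨conicFrame (c • M) r, linearIndependent_conicFrame hN hrow,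
    fun h => ne_zero_of_row_two_eq hN hrow (funext h), ?_, W₁, W₂, hW₁, hW₂, hW₁inf, hW₂inf, ?_⟩
  · rw [ncard_spreadPlanes_meeting_span_conicFrame hrow, hsec]
  · rw [bbExact_conicOf_eq hN hrow, hunion, Set.union_assoc]

/-- Theorem 4.1: for an `F_q`-conic in a secant `F_q`-subplane, `V([C])`
decomposes into a non-degenerate conic lying in a plane of PG(6,q)∖Σ∞ meeting q+1 spread
planes, together with two planes in Σ∞ (possibly repeated, possibly in the extension). -/
theorem fqConic_secant_decomposition (Fq F3 F6 : Type) [Field Fq] [Field F3] [Field F6]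
    [Fintype Fq] [Fintype F3] [Fintype F6]
    [Algebra Fq F3] [Algebra F3 F6] [Algebra Fq F6] [IsScalarTower Fq F3 F6]
    (h3 : Fintype.card F3 = Fintype.card Fq ^ 3)
    (h6 : Fintype.card F6 = Fintype.card Fq ^ 6)
    (M : Matrix (Fin 3) (Fin 3) F3) (hM : IsUnit M.det)
    (hsec : SecantSubplane Fq F3 M) :
    ∃ v : Fin (2 + 1) → V6 Fq F3, LinearIndependent Fq v ∧
      (¬ ∀ i, (v i).2 = 0) ∧
      {s : Set (Pt6 Fq F3) | IsSpreadPlane Fq F3 s ∧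
        ∃ Q ∈ s, Q.rep ∈ Submodule.span Fq (Set.range v)}.ncard = Fintype.card Fq + 1 ∧
      ∃ W1 W2 : Submodule F6 (V66 F6),
        Module.finrank F6 W1 = 3 ∧ Module.finrank F6 W2 = 3 ∧
        (∀ w ∈ W1, (w : V66 F6).2 = 0) ∧ (∀ w ∈ W2, (w : V66 F6).2 = 0) ∧
        bbExact Fq F3 (conicOf Fq F3 M) =
          nrcPts6 Fq F3 v ∪ {Q | iota66 Fq F3 F6 Q.rep ∈ W1} ∪
            {Q | iota66 Fq F3 F6 Q.rep ∈ W2} :=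
  fqConic_secant_decomposition_general Fq F3 F6 M hM hsec
end
end
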